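/- The intrinsic Lyapunov function is bounded by its initial value: for all s ≥ 0, θ̃(s)[L̂(x̃(s), ŷ) − L̂(x̂, ỹ(s))] + (1/2)φ̃(s)‖ζ̃(s) − x̂‖² + (1/2)ψ̃(s)‖η̃(s) − ŷ‖² ≤ Ẽ(0). -/

import Mathlib

open scoped RealInnerProductSpace

set_option linter.unusedSectionVars false
set_option maxHeartbeats 1000000
open scoped RealInnerProductSpace
open Set

section Aux
variable {X Y : Type*} [NormedAddCommGroup X] [InnerProductSpace ℝ X] [CompleteSpace X]
  [NormedAddCommGroup Y] [InnerProductSpace ℝ Y] [CompleteSpace Y]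


lemma grad_comp_deriv {f : X → ℝ} {g : X} {c : ℝ → X} {c' : X} {s : ℝ}
    (hf : HasGradientAt f g (c s)) (hc : HasDerivAt c c' s) :
    HasDerivAt (fun t => f (c t)) ⟪g, c'⟫ s := by
  exact hf.hasFDerivAt.comp_hasDerivAt s hc

lemma convex_grad_ineq {f : X → ℝ} {g p : X} (hc : ConvexOn ℝ Set.univ f)
    (hf : HasGradientAt f g p) (q : X) : ⟪g, q - p⟫ ≤ f q - f p := by
  have hcurve : HasDerivAt (fun t : ℝ => p + t • (q - p)) (q - p) 0 := by
    simpa using ((hasDerivAt_id (0:ℝ)).smul_const (q - p)).const_add p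
  have hf0 : HasGradientAt f g (p + (0:ℝ) • (q - p)) := by simpa using hf
  have hD : HasDerivAt (fun t : ℝ => f (p + t • (q - p))) ⟪g, q - p⟫ 0 :=
    grad_comp_deriv hf0 hcurve
  have hslope := hasDerivAt_iff_tendsto_slope.1 hD
  have hslope' : Filter.Tendsto (slope (fun t : ℝ => f (p + t • (q - p))) 0)
      (nhdsWithin 0 (Set.Ioi 0)) (nhds ⟪g, q - p⟫) :=
    hslope.mono_left (nhdsWithin_mono 0 (fun x hx => ne_of_gt hx))
  refine le_of_tendsto hslope' ?_
  filter_upwards [Ioc_mem_nhdsGT_of_mem (by norm_num : (0:ℝ) ∈ Set.Ico 0 1)] with t ht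
  obtain ⟨ht0, ht1⟩ := ht
  have hcomb := hc.2 (Set.mem_univ q) (Set.mem_univ p) ht0.le (by linarith : (0:ℝ) ≤ 1 - t)
    (by ring)
  have heq : t • q + (1 - t) • p = p + t • (q - p) := by module
  rw [heq] at hcomb
  have hsl : slope (fun t : ℝ => f (p + t • (q - p))) 0 t
      = (f (p + t • (q - p)) - f p) / t := by
    rw [slope_def_field]; simp
  rw [hsl, div_le_iff₀ ht0]
  rw [smul_eq_mul, smul_eq_mul] at hcomb
  nlinarith [hcomb]

lemma gradsq (c : ℝ) (p : X) : HasGradientAt (fun p : X => c / 2 * ‖p‖ ^ 2) (c • p) p := by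
  have h : HasFDerivAt (fun p : X => ⟪p, p⟫)
      ((fderivInnerCLM ℝ (p, p)).comp ((ContinuousLinearMap.id ℝ X).prod
        (ContinuousLinearMap.id ℝ X))) p :=
    (hasFDerivAt_id p).inner ℝ (hasFDerivAt_id p)
  have h2 := h.const_mul (c / 2)
  rw [hasGradientAt_iff_hasFDerivAt]
  have heq : (fun p : X => c / 2 * ‖p‖ ^ 2) = fun p : X => c / 2 * ⟪p, p⟫ := by
    funext q; rw [real_inner_self_eq_norm_sq]
  rw [heq]
  refine h2.congr_fderiv ?_
  ext v
  simp [InnerProductSpace.toDual_apply_apply, real_inner_smul_left, fderivInnerCLM]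
  rw [real_inner_comm]; ring

lemma strong_ineq {f : X → ℝ} {f' : X → X} {c : ℝ}
    (hconv : ConvexOn ℝ Set.univ (fun p => f p - c / 2 * ‖p‖ ^ 2))
    (hf : ∀ p, HasGradientAt f (f' p) p) (p q : X) :
    f p + ⟪f' p, q - p⟫ + c / 2 * ‖q - p‖ ^ 2 ≤ f q := by
  have hg : HasGradientAt (fun p => f p - c / 2 * ‖p‖ ^ 2) (f' p - c • p) p := by
    have h := (hf p).hasFDerivAt.sub (gradsq c p).hasFDerivAt
    rw [hasGradientAt_iff_hasFDerivAt, map_sub]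
    exact h
  have key := convex_grad_ineq hconv hg q
  have e1 : ‖q - p‖ ^ 2 = ‖q‖ ^ 2 - 2 * ⟪q, p⟫ + ‖p‖ ^ 2 := norm_sub_sq_real q p
  have e2 : ⟪p, q - p⟫ = ⟪q, p⟫ - ‖p‖ ^ 2 := by
    rw [inner_sub_right, real_inner_self_eq_norm_sq, real_inner_comm]
  rw [inner_sub_left, real_inner_smul_left, e2] at key
  rw [e1]; linarith [key]


lemma normsq_deriv {c : ℝ → X} {v : X} {s : ℝ} (h : HasDerivAt c v s) (a : X) :
    HasDerivAt (fun t => ‖c t - a‖ ^ 2) (2 * ⟪c s - a, v⟫) s := by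
  have h2 := (h.sub_const a).inner ℝ (h.sub_const a)
  have he : (fun t => (⟪c t - a, c t - a⟫ : ℝ)) = fun t => ‖c t - a‖ ^ 2 := by
    funext t; rw [real_inner_self_eq_norm_sq]
  rw [he] at h2
  refine h2.congr_deriv ?_
  rw [real_inner_comm]; ring

lemma innerK_deriv {c : ℝ → X} {v : X} {s : ℝ} (h : HasDerivAt c v s) (K : X →L[ℝ] Y) (b : Y) :
    HasDerivAt (fun t => ⟪K (c t), b⟫) ⟪K v, b⟫ s := by
  have hK : HasDerivAt (fun t => K (c t)) (K v) s :=
    (K.hasFDerivAt (x := c s)).comp_hasDerivAt s h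
  simpa using hK.inner ℝ (hasDerivAt_const s b)

lemma innerConst_deriv {c : ℝ → X} {v : X} {s : ℝ} (h : HasDerivAt c v s) (b : X) :
    HasDerivAt (fun t => ⟪b, c t⟫) ⟪b, v⟫ s := by
  simpa using (hasDerivAt_const s b).inner ℝ h
end Aux

lemma scal_comm {X : Type*} [NormedAddCommGroup X] [InnerProductSpace ℝ X]
    (c : ℝ) (u v : X) : c * ⟪u, v⟫ = c * ⟪v, u⟫ := by rw [real_inner_comm]


/-- Lyapunov analysis of the intrinsic IC-PDPS ODE: the intrinsic Lyapunov function
is bounded by its initial value. -/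

theorem stmt_18
    {X Y : Type*} [NormedAddCommGroup X] [InnerProductSpace ℝ X] [CompleteSpace X]
    [NormedAddCommGroup Y] [InnerProductSpace ℝ Y] [CompleteSpace Y]
    (K : X →L[ℝ] Y) (γ ρ : ℝ) (hγ : 0 ≤ γ) (hρ : 0 ≤ ρ)
    (G : X → ℝ) (Fs : Y → ℝ) (G' : X → X) (Fs' : Y → Y)
    (hG : ∀ p, HasGradientAt G (G' p) p)
    (hFs : ∀ q, HasGradientAt Fs (Fs' q) q)
    (hGconv : ConvexOn ℝ Set.univ (fun p => G p - γ / 2 * ‖p‖ ^ 2))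
    (hFconv : ConvexOn ℝ Set.univ (fun q => Fs q - ρ / 2 * ‖q‖ ^ 2))
    (xhat : X) (yhat : Y)
    (hsadx : G' xhat + ContinuousLinearMap.adjoint K yhat = 0)
    (hsady : Fs' yhat - K xhat = 0)
    (Lhat : X → Y → ℝ)
    (hLhat : ∀ p q, Lhat p q
      = G p - γ / 2 * ‖p - xhat‖ ^ 2 + ⟪K p, q⟫ - Fs q + ρ / 2 * ‖q - yhat‖ ^ 2)
    (x ζ : ℝ → X) (y η : ℝ → Y) (φ ψ θ : ℝ → ℝ)
    (hφpos : ∀ s, 0 ≤ s → 0 < φ s) (hψpos : ∀ s, 0 ≤ s → 0 < ψ s)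
    (hθpos : ∀ s, 0 ≤ s → 0 < θ s)
    (hx : ∀ s, 0 ≤ s → HasDerivAt x
      ((Real.sqrt (φ s * ψ s) / θ s) • (ζ s - x s)) s)
    (hy : ∀ s, 0 ≤ s → HasDerivAt y
      ((Real.sqrt (φ s * ψ s) / θ s) • (η s - y s)) s)
    (hζ : ∀ s, 0 ≤ s → HasDerivAt ζ
      ((Real.sqrt (ψ s) / Real.sqrt (φ s)) •
        (γ • (x s - ζ s) - G' (x s) - ContinuousLinearMap.adjoint K (η s))) s)
    (hη : ∀ s, 0 ≤ s → HasDerivAt η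
      ((Real.sqrt (φ s) / Real.sqrt (ψ s)) •
        (ρ • (y s - η s) - Fs' (y s) + K (ζ s))) s)
    (hφ' : ∀ s, 0 ≤ s → HasDerivAt φ (2 * γ * Real.sqrt (φ s * ψ s)) s)
    (hψ' : ∀ s, 0 ≤ s → HasDerivAt ψ (2 * ρ * Real.sqrt (φ s * ψ s)) s)
    (hθ' : ∀ s, 0 ≤ s → HasDerivAt θ (Real.sqrt (φ s * ψ s)) s)
    (E : ℝ → ℝ)
    (hE : ∀ s, E s = θ s * (Lhat (x s) yhat - Lhat xhat (y s))
      + 1 / 2 * φ s * ‖ζ s - xhat‖ ^ 2 + 1 / 2 * ψ s * ‖η s - yhat‖ ^ 2) :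
    ∀ s, 0 ≤ s →
      θ s * (Lhat (x s) yhat - Lhat xhat (y s))
        + 1 / 2 * φ s * ‖ζ s - xhat‖ ^ 2 + 1 / 2 * ψ s * ‖η s - yhat‖ ^ 2 ≤ E 0 := by
  have hEfun : E = fun t => θ t * (Lhat (x t) yhat - Lhat xhat (y t))
      + 1 / 2 * φ t * ‖ζ t - xhat‖ ^ 2 + 1 / 2 * ψ t * ‖η t - yhat‖ ^ 2 := funext hE
  have main : ∀ s, 0 ≤ s → ∃ V, HasDerivAt E V s ∧ V ≤ 0 := by
    intro s hs
    have hθne : θ s ≠ 0 := (hθpos s hs).ne'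
    have hφsqne : Real.sqrt (φ s) ≠ 0 := (Real.sqrt_pos.2 (hφpos s hs)).ne'
    have hψsqne : Real.sqrt (ψ s) ≠ 0 := (Real.sqrt_pos.2 (hψpos s hs)).ne'
    have hφms : Real.sqrt (φ s) * Real.sqrt (φ s) = φ s := Real.mul_self_sqrt (hφpos s hs).le
    have hψms : Real.sqrt (ψ s) * Real.sqrt (ψ s) = ψ s := Real.mul_self_sqrt (hψpos s hs).le
    have hsm : Real.sqrt (φ s * ψ s) = Real.sqrt (φ s) * Real.sqrt (ψ s) :=
      Real.sqrt_mul (hφpos s hs).le _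
    -- clean derivative of the Lagrangian gap
    have hA : HasDerivAt (fun t => Lhat (x t) yhat - Lhat xhat (y t))
        (Real.sqrt (φ s * ψ s) / θ s *
          (⟪G' (x s), ζ s - x s⟫ - γ * ⟪x s - xhat, ζ s - x s⟫ + ⟪K (ζ s - x s), yhat⟫
            - ⟪K xhat, η s - y s⟫ + ⟪Fs' (y s), η s - y s⟫
            - ρ * ⟪y s - yhat, η s - y s⟫)) s := by
      have hfun : (fun t => Lhat (x t) yhat - Lhat xhat (y t))
          = fun t => (G (x t) - γ / 2 * ‖x t - xhat‖ ^ 2 + ⟪K (x t), yhat⟫ - Fs yhat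
              + ρ / 2 * ‖yhat - yhat‖ ^ 2)
            - (G xhat - γ / 2 * ‖xhat - xhat‖ ^ 2 + ⟪K xhat, y t⟫ - Fs (y t)
              + ρ / 2 * ‖y t - yhat‖ ^ 2) := funext fun t => by rw [hLhat, hLhat]
      rw [hfun]
      have h1 := grad_comp_deriv (hG (x s)) (hx s hs)
      have h2 := HasDerivAt.const_mul (γ / 2) (normsq_deriv (hx s hs) xhat)
      have h3 := innerK_deriv (hx s hs) K yhat
      have h4 := innerConst_deriv (hy s hs) (K xhat)
      have h5 := grad_comp_deriv (hFs (y s)) (hy s hs)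
      have h6 := HasDerivAt.const_mul (ρ / 2) (normsq_deriv (hy s hs) yhat)
      have hb1 := (((h1.sub h2).add h3).sub_const (Fs yhat)).add_const
        (ρ / 2 * ‖yhat - yhat‖ ^ 2)
      have hb2 := ((((hasDerivAt_const s (G xhat)).sub
        (hasDerivAt_const s (γ / 2 * ‖xhat - xhat‖ ^ 2))).add h4).sub h5).add h6
      refine (hb1.sub hb2).congr_deriv ?_
      simp only [map_smul, real_inner_smul_right, real_inner_smul_left, smul_eq_mul]
      ring
    -- derivative of θ * gap
    have hP1 : HasDerivAt (fun t => θ t * (Lhat (x t) yhat - Lhat xhat (y t)))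
        (Real.sqrt (φ s * ψ s) *
          ((Lhat (x s) yhat - Lhat xhat (y s))
            + (⟪G' (x s), ζ s - x s⟫ - γ * ⟪x s - xhat, ζ s - x s⟫ + ⟪K (ζ s - x s), yhat⟫
              - ⟪K xhat, η s - y s⟫ + ⟪Fs' (y s), η s - y s⟫
              - ρ * ⟪y s - yhat, η s - y s⟫))) s := by
      refine ((hθ' s hs).mul hA).congr_deriv ?_
      field_simp
    -- derivative of the φ-weighted term
    have hP2 : HasDerivAt (fun t => 1 / 2 * φ t * ‖ζ t - xhat‖ ^ 2)
        (γ * Real.sqrt (φ s * ψ s) * ‖ζ s - xhat‖ ^ 2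
          + Real.sqrt (φ s * ψ s) *
            ⟪ζ s - xhat, γ • (x s - ζ s) - G' (x s)
              - ContinuousLinearMap.adjoint K (η s)⟫) s := by
      refine ((HasDerivAt.const_mul ((1:ℝ) / 2) (hφ' s hs)).mul
        (normsq_deriv (hζ s hs) xhat)).congr_deriv ?_
      simp only [real_inner_smul_right]
      rw [hsm]
      field_simp
      linear_combination (-(⟪ζ s - xhat, γ • (x s - ζ s) - G' (x s)
        - ContinuousLinearMap.adjoint K (η s)⟫ : ℝ)) * hφms
    -- derivative of the ψ-weighted term
    have hP3 : HasDerivAt (fun t => 1 / 2 * ψ t * ‖η t - yhat‖ ^ 2)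
        (ρ * Real.sqrt (φ s * ψ s) * ‖η s - yhat‖ ^ 2
          + Real.sqrt (φ s * ψ s) *
            ⟪η s - yhat, ρ • (y s - η s) - Fs' (y s) + K (ζ s)⟫) s := by
      refine ((HasDerivAt.const_mul ((1:ℝ) / 2) (hψ' s hs)).mul
        (normsq_deriv (hη s hs) yhat)).congr_deriv ?_
      simp only [real_inner_smul_right]
      rw [hsm]
      field_simp
      linear_combination (-(⟪η s - yhat, ρ • (y s - η s) - Fs' (y s) + K (ζ s)⟫ : ℝ)) * hψms
    have hD : HasDerivAt E
        (Real.sqrt (φ s * ψ s) *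
          ((Lhat (x s) yhat - Lhat xhat (y s))
            + (⟪G' (x s), ζ s - x s⟫ - γ * ⟪x s - xhat, ζ s - x s⟫ + ⟪K (ζ s - x s), yhat⟫
              - ⟪K xhat, η s - y s⟫ + ⟪Fs' (y s), η s - y s⟫
              - ρ * ⟪y s - yhat, η s - y s⟫))
          + (γ * Real.sqrt (φ s * ψ s) * ‖ζ s - xhat‖ ^ 2
            + Real.sqrt (φ s * ψ s) *
              ⟪ζ s - xhat, γ • (x s - ζ s) - G' (x s)
                - ContinuousLinearMap.adjoint K (η s)⟫)
          + (ρ * Real.sqrt (φ s * ψ s) * ‖η s - yhat‖ ^ 2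
            + Real.sqrt (φ s * ψ s) *
              ⟪η s - yhat, ρ • (y s - η s) - Fs' (y s) + K (ζ s)⟫)) s := by
      rw [hEfun]
      exact (hP1.add hP2).add hP3
    refine ⟨_, hD, ?_⟩
    -- nonpositivity
    have hGs := strong_ineq hGconv hG (x s) xhat
    have hFss := strong_ineq hFconv hFs (y s) yhat
    have hR : (Lhat (x s) yhat - Lhat xhat (y s))
          + (⟪G' (x s), ζ s - x s⟫ - γ * ⟪x s - xhat, ζ s - x s⟫ + ⟪K (ζ s - x s), yhat⟫
            - ⟪K xhat, η s - y s⟫ + ⟪Fs' (y s), η s - y s⟫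
            - ρ * ⟪y s - yhat, η s - y s⟫)
          + (γ * ‖ζ s - xhat‖ ^ 2
            + ⟪ζ s - xhat, γ • (x s - ζ s) - G' (x s)
                - ContinuousLinearMap.adjoint K (η s)⟫)
          + (ρ * ‖η s - yhat‖ ^ 2
            + ⟪η s - yhat, ρ • (y s - η s) - Fs' (y s) + K (ζ s)⟫) ≤ 0 := by
      rw [hLhat, hLhat]
      simp only [norm_sub_sq_real, real_inner_self_eq_norm_sq, inner_sub_left, inner_sub_right,
        inner_add_left, inner_add_right, real_inner_smul_left, real_inner_smul_right,
        map_sub, map_add, map_smul, ContinuousLinearMap.adjoint_inner_left,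
        ContinuousLinearMap.adjoint_inner_right, smul_eq_mul] at hGs hFss ⊢
      linarith [hGs, hFss,
        real_inner_comm (x s) xhat, real_inner_comm (x s) (ζ s),
        real_inner_comm (x s) (G' (x s)), real_inner_comm xhat (ζ s),
        real_inner_comm xhat (G' (x s)), real_inner_comm (ζ s) (G' (x s)),
        scal_comm γ (x s) xhat, scal_comm γ (x s) (ζ s), scal_comm γ xhat (ζ s),
        real_inner_comm (y s) yhat, real_inner_comm (y s) (η s),
        real_inner_comm (y s) (Fs' (y s)), real_inner_comm yhat (η s),
        real_inner_comm yhat (Fs' (y s)), real_inner_comm (η s) (Fs' (y s)),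
        scal_comm ρ (y s) yhat, scal_comm ρ (y s) (η s), scal_comm ρ yhat (η s),
        real_inner_comm (K (x s)) (y s), real_inner_comm (K (x s)) (η s),
        real_inner_comm (K (x s)) yhat, real_inner_comm (K (ζ s)) (y s),
        real_inner_comm (K (ζ s)) (η s), real_inner_comm (K (ζ s)) yhat,
        real_inner_comm (K xhat) (y s), real_inner_comm (K xhat) (η s),
        real_inner_comm (K xhat) yhat]
    have hσ := Real.sqrt_nonneg (φ s * ψ s)
    nlinarith [hσ, hR]
  -- monotonicity
  have hanti : AntitoneOn E (Set.Ici (0:ℝ)) := by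
    apply antitoneOn_of_deriv_nonpos (convex_Ici 0)
    · intro t ht
      obtain ⟨V, hV, _⟩ := main t ht
      exact hV.continuousAt.continuousWithinAt
    · intro t ht
      rw [interior_Ici] at ht
      obtain ⟨V, hV, _⟩ := main t (le_of_lt ht)
      exact hV.differentiableAt.differentiableWithinAt
    · intro t ht
      rw [interior_Ici] at ht
      obtain ⟨V, hV, hV0⟩ := main t (le_of_lt ht)
      rw [hV.deriv]; exact hV0
  intro s hs
  rw [← hE s]
  exact hanti (Set.self_mem_Ici) hs hs
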